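/- Let 0 < c1 < c2 < A and 0 < c1' < c2' < A' be real numbers, set θ1 = (c2 − c1)/(A − c1) and θ2 = (c2' − c1')/(A' − c1'), and assume θ1 + θ2 > 1. Let a_1, …, a_N and a'_1, …, a'_N be real numbers with a_j ≤ A, a'_j ≤ A' for all 1 ≤ j ≤ N, ∑_{j=1}^{N} a_j ≥ c2·N and ∑_{j=1}^{N} a'_j ≥ c2'·N. Then there exist an integer l ≥ (θ1 + θ2 − 1)·N and integers 1 ≤ n_1 < ⋯ < n_l ≤ N such that for every i = 1, …, l and every integer 0 ≤ n < n_i one has simultaneously ∑_{j=n+1}^{n_i} a_j ≥ c1·(n_i − n) and ∑_{j=n+1}^{n_i} a'_j ≥ c1'·(n_i − n). -/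

import Mathlib

/-!
With the potential `T m = ∑_{j ≤ m} a j - c1 * m`, a Pliss time is exactly a time `n` at which
`T n` is a running maximum of `T`. Since `T` grows by at most `A - c1` per step, it can only climb
to `T N ≥ (c2 - c1) * N` through at least `θ1 * N` such record times. Two subsets of `{1, …, N}`
of sizes at least `θ1 * N` and `θ2 * N` meet in at least `(θ1 + θ2 - 1) * N` elements.
-/

open Finset

def IsRecordTime {α : Type*} [Preorder α] (T : ℕ → α) (n : ℕ) : Prop :=
  ∀ k < n, T k ≤ T n

open scoped Classical in
theorem le_add_card_isRecordTime_nsmul {α : Type*} [AddCommMonoid α] [LinearOrder α]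
    [IsOrderedAddMonoid α] {T : ℕ → α} {B : α} {N : ℕ} (hT : ∀ m < N, T (m + 1) ≤ T m + B) :
    ∀ k ≤ N, T k ≤ T 0 + #{n ∈ Icc 1 N | IsRecordTime T n} • B := by
  induction N with
  | zero => simp
  | succ N ih =>
    specialize ih fun m hm => hT m (by omega)
    rw [← insert_Icc_right_eq_Icc_add_one (by omega), filter_insert]
    by_cases hrec : IsRecordTime T (N + 1)
    · rw [if_pos hrec, card_insert_of_notMem (by simp), succ_nsmul, ← add_assoc]
      have hN : T (N + 1) ≤ T 0 + #{n ∈ Icc 1 N | IsRecordTime T n} • B + B :=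
        (hT N N.lt_succ_self).trans (add_le_add (ih N le_rfl) le_rfl)
      intro k hk
      rcases hk.lt_or_eq with hk | rfl
      · exact (hrec k hk).trans hN
      · exact hN
    · rw [if_neg hrec]
      obtain ⟨k₀, hk₀, hlt⟩ : ∃ k₀ < N + 1, T (N + 1) < T k₀ := by
        simpa [IsRecordTime] using hrec
      intro k hk
      rcases hk.lt_or_eq with hk | rfl
      · exact ih k (by omega)
      · exact hlt.le.trans (ih k₀ (by omega))

def IsPlissTime (c : ℝ) (a : ℕ → ℝ) (n : ℕ) : Prop :=
  ∀ k < n, c * ((n : ℝ) - k) ≤ ∑ j ∈ Icc (k + 1) n, a j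

def plissPotential (c : ℝ) (a : ℕ → ℝ) (m : ℕ) : ℝ :=
  ∑ j ∈ Ioc 0 m, a j - c * m

theorem isPlissTime_iff_isRecordTime {c : ℝ} {a : ℕ → ℝ} {n : ℕ} :
    IsPlissTime c a n ↔ IsRecordTime (plissPotential c a) n := by
  refine forall₂_congr fun k hk => ?_
  rw [Icc_add_one_left_eq_Ioc, plissPotential, plissPotential,
    ← sum_Ioc_consecutive a (Nat.zero_le k) hk.le]
  constructor <;> intro h <;> linarith

theorem plissPotential_succ_le {c B : ℝ} {a : ℕ → ℝ} {m : ℕ} (ha : a (m + 1) ≤ B) :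
    plissPotential c a (m + 1) ≤ plissPotential c a m + (B - c) := by
  simp only [plissPotential, sum_Ioc_succ_top (Nat.zero_le m)]
  push_cast
  linarith

theorem exists_isPlissTime_card_ge {c c₂ B : ℝ} (hcB : c < B) {N : ℕ} {a : ℕ → ℝ}
    (ha : ∀ j, 1 ≤ j → j ≤ N → a j ≤ B) (hsum : c₂ * N ≤ ∑ j ∈ Icc 1 N, a j) :
    ∃ s ⊆ Icc 1 N, (∀ n ∈ s, IsPlissTime c a n) ∧ (c₂ - c) / (B - c) * N ≤ #s := by
  classical
  refine ⟨{n ∈ Icc 1 N | IsPlissTime c a n}, filter_subset _ _,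
    fun n hn => (mem_filter.1 hn).2, ?_⟩
  have hrec := le_add_card_isRecordTime_nsmul (T := plissPotential c a) (B := B - c) (N := N)
    (fun m hm => plissPotential_succ_le (ha (m + 1) (by omega) hm)) N le_rfl
  simp only [← isPlissTime_iff_isRecordTime, nsmul_eq_mul] at hrec
  have hpot : (c₂ - c) * N ≤ plissPotential c a N := by
    rw [plissPotential, ← Icc_add_one_left_eq_Ioc, zero_add]
    linarith
  have h0 : plissPotential c a 0 = 0 := by simp [plissPotential]
  rw [div_mul_eq_mul_div, div_le_iff₀ (sub_pos.2 hcB)]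
  linarith

theorem card_add_card_le_card_add_card_inter {α : Type*} [DecidableEq α] {s t u : Finset α}
    (hs : s ⊆ u) (ht : t ⊆ u) : #s + #t ≤ #u + #(s ∩ t) := by
  rw [← card_union_add_card_inter]
  exact Nat.add_le_add_right (card_le_card (union_subset hs ht)) _

theorem simultaneous_pliss_general (c1 c2 A c1' c2' A' : ℝ)
    (hc12 : c1 < c2) (hc2A : c2 < A)
    (hc12' : c1' < c2') (hc2A' : c2' < A')
    (N : ℕ) (a a' : ℕ → ℝ)
    (ha : ∀ j, 1 ≤ j → j ≤ N → a j ≤ A) (ha' : ∀ j, 1 ≤ j → j ≤ N → a' j ≤ A')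
    (hsum : c2 * N ≤ ∑ j ∈ Finset.Icc 1 N, a j)
    (hsum' : c2' * N ≤ ∑ j ∈ Finset.Icc 1 N, a' j) :
    ∃ (l : ℕ) (n : Fin l → ℕ),
      ((c2 - c1) / (A - c1) + (c2' - c1') / (A' - c1') - 1) * N ≤ (l : ℝ) ∧
      StrictMono n ∧
      (∀ i, 1 ≤ n i ∧ n i ≤ N) ∧
      (∀ i, ∀ k, k < n i →
        c1 * ((n i : ℝ) - (k : ℝ)) ≤ ∑ j ∈ Finset.Icc (k + 1) (n i), a j ∧
        c1' * ((n i : ℝ) - (k : ℝ)) ≤ ∑ j ∈ Finset.Icc (k + 1) (n i), a' j) := by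
  obtain ⟨s, hsN, hs, hcard⟩ := exists_isPlissTime_card_ge (hc12.trans hc2A) ha hsum
  obtain ⟨s', hsN', hs', hcard'⟩ := exists_isPlissTime_card_ge (hc12'.trans hc2A') ha' hsum'
  have hinter : #s + #s' ≤ N + #(s ∩ s') := by
    simpa using card_add_card_le_card_add_card_inter hsN hsN'
  have hinter_real : (#s + #s' : ℝ) ≤ N + #(s ∩ s') := by exact_mod_cast hinter
  let n := (s ∩ s').orderEmbOfFin rfl
  have hmem (i : Fin #(s ∩ s')) : n i ∈ s ∧ n i ∈ s' :=
    mem_inter.1 ((s ∩ s').orderEmbOfFin_mem rfl i)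
  refine ⟨#(s ∩ s'), n, ?_, n.strictMono, fun i => mem_Icc.1 (hsN (hmem i).1),
    fun i k hk => ⟨hs _ (hmem i).1 k hk, hs' _ (hmem i).2 k hk⟩⟩
  linarith [add_mul ((c2 - c1) / (A - c1)) ((c2' - c1') / (A' - c1')) (N : ℝ)]

/-- **Simultaneous Pliss times.** Given two Pliss configurations with
`θ1 = (c2 - c1)/(A - c1)`, `θ2 = (c2' - c1')/(A' - c1')` and `θ1 + θ2 > 1`,
there are at least `(θ1 + θ2 - 1) * N` common times `1 ≤ n 1 < ⋯ < n l ≤ N` at which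
both Pliss inequalities hold simultaneously. -/
theorem simultaneous_pliss (c1 c2 A c1' c2' A' : ℝ)
    (hc1 : 0 < c1) (hc12 : c1 < c2) (hc2A : c2 < A)
    (hc1' : 0 < c1') (hc12' : c1' < c2') (hc2A' : c2' < A')
    (hθ : 1 < (c2 - c1) / (A - c1) + (c2' - c1') / (A' - c1'))
    (N : ℕ) (a a' : ℕ → ℝ)
    (ha : ∀ j, 1 ≤ j → j ≤ N → a j ≤ A) (ha' : ∀ j, 1 ≤ j → j ≤ N → a' j ≤ A')
    (hsum : c2 * N ≤ ∑ j ∈ Finset.Icc 1 N, a j)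
    (hsum' : c2' * N ≤ ∑ j ∈ Finset.Icc 1 N, a' j) :
    ∃ (l : ℕ) (n : Fin l → ℕ),
      ((c2 - c1) / (A - c1) + (c2' - c1') / (A' - c1') - 1) * N ≤ (l : ℝ) ∧
      StrictMono n ∧
      (∀ i, 1 ≤ n i ∧ n i ≤ N) ∧
      (∀ i, ∀ k, k < n i →
        c1 * ((n i : ℝ) - (k : ℝ)) ≤ ∑ j ∈ Finset.Icc (k + 1) (n i), a j ∧
        c1' * ((n i : ℝ) - (k : ℝ)) ≤ ∑ j ∈ Finset.Icc (k + 1) (n i), a' j) :=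
  simultaneous_pliss_general c1 c2 A c1' c2' A' hc12 hc2A hc12' hc2A' N a a' ha ha' hsum hsum'
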